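/- arXiv:2203.11763 — 4 statements merged into one kernel-verified Lean document; each statement's English description precedes it below -/
import Mathlib

section
/- Let Ω = [0,1]. A finitely supported function μ : ℝ → ℕ whose support H = {h : μ(h) ≥ 1} is contained in the open interval (0,1) is the breakpoint configuration of some Ω-tropical polynomial if and only if the sum Σ_{h ∈ H} μ(h)·h is an integer. -/
open Classical MeasureTheory Function Set

/-- An `Ω`-tropical polynomial on `Ω = [0,1]`: a function vanishing at `0` and `1`,
nonnegative on `[0,1]`, which on `[0,1]` is the minimum of finitely many affine
functions `x ↦ a_v + v·x` with integer slopes `v`. -/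
def IsTropPoly (F : ℝ → ℝ) : Prop :=
  F 0 = 0 ∧ F 1 = 0 ∧ (∀ x ∈ Set.Icc (0 : ℝ) 1, 0 ≤ F x) ∧
    ∃ s : Finset (ℤ × ℝ), ∃ hs : s.Nonempty,
      ∀ x ∈ Set.Icc (0 : ℝ) 1, F x = s.inf' hs fun va => va.2 + (va.1 : ℝ) * x

/-- `μ` is the breakpoint configuration of `F`: at every `h ∈ (0,1)`, the value `μ h`
is the downward jump `F'(h−) − F'(h+)` of the derivative of `F` at `h`. -/
def IsBreakpointConfig (F : ℝ → ℝ) (μ : ℝ → ℕ) : Prop :=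
  ∀ h ∈ Set.Ioo (0 : ℝ) 1, ∃ dl dr : ℝ,
    HasDerivWithinAt F dl (Set.Iio h) h ∧ HasDerivWithinAt F dr (Set.Ioi h) h ∧
      (μ h : ℝ) = dl - dr

/-!
With `Φ(x) = ∑ μ(h) (x - h)⁺`, the kinks of `Φ` exactly cancel those of `F`, so `G = F + Φ` is
differentiable on `(0,1)`. Off the finite support of `μ`, `G'` is an integer: `F'` is the slope
of an affine piece active there and `Φ'(x) = ∑_{h < x} μ(h)`. By Darboux's theorem a derivative
with countable range on an interval is constant, so the mean value theorem makes
`G(1) - G(0) = ∑ μ(h) (1 - h)` an integer. Conversely, if `∑ μ(h) h = z`, then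
`F(x) = (∑ μ(h) - z) x - Φ(x) = (∑ μ(h) - z) x + ∑ min (μ(h) h - μ(h) x) 0` is the required
tropical polynomial; nonnegativity follows from concavity.
-/

open Filter Topology

def IsMinOfIntAffine (f : ℝ → ℝ) : Prop :=
  ∃ s : Finset (ℤ × ℝ), ∃ hs : s.Nonempty, ∀ x, f x = s.inf' hs fun va => va.2 + (va.1 : ℝ) * x

namespace IsMinOfIntAffine

variable {f g : ℝ → ℝ}

theorem affine (v : ℤ) (a : ℝ) : IsMinOfIntAffine fun x => a + v * x :=
  ⟨{(v, a)}, Finset.singleton_nonempty _, fun x => by simp⟩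

theorem min (hf : IsMinOfIntAffine f) (hg : IsMinOfIntAffine g) :
    IsMinOfIntAffine fun x => min (f x) (g x) := by
  obtain ⟨s, hs, hfs⟩ := hf
  obtain ⟨s', hs', hgs⟩ := hg
  exact ⟨s ∪ s', hs.mono Finset.subset_union_left, fun x => by
    dsimp only
    rw [Finset.inf'_union hs hs', hfs, hgs]⟩

theorem add (hf : IsMinOfIntAffine f) (hg : IsMinOfIntAffine g) :
    IsMinOfIntAffine fun x => f x + g x := by
  obtain ⟨s, hs, hfs⟩ := hf
  obtain ⟨s', hs', hgs⟩ := hg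
  refine ⟨Finset.image₂ (· + ·) s s', hs.image₂ hs', fun x => ?_⟩
  dsimp only
  rw [Finset.inf'_image₂_left, hfs, hgs]
  apply le_antisymm
  · refine Finset.le_inf' _ _ fun a ha => Finset.le_inf' _ _ fun b hb => ?_
    have := add_le_add (Finset.inf'_le (fun va => va.2 + (va.1 : ℝ) * x) ha)
      (Finset.inf'_le (fun va => va.2 + (va.1 : ℝ) * x) hb)
    simp only [Prod.fst_add, Prod.snd_add, Int.cast_add]
    linarith
  · obtain ⟨a, ha, hfa⟩ := Finset.exists_mem_eq_inf' hs fun va => va.2 + (va.1 : ℝ) * x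
    obtain ⟨b, hb, hgb⟩ := Finset.exists_mem_eq_inf' hs' fun va => va.2 + (va.1 : ℝ) * x
    refine (Finset.inf'_le _ ha).trans ((Finset.inf'_le _ hb).trans_eq ?_)
    simp only [hfa, hgb, Prod.fst_add, Prod.snd_add, Int.cast_add]
    ring

theorem sum {ι : Type*} (s : Finset ι) {f : ι → ℝ → ℝ} (hf : ∀ i ∈ s, IsMinOfIntAffine (f i)) :
    IsMinOfIntAffine fun x => ∑ i ∈ s, f i x := by
  induction s using Finset.induction_on with
  | empty => simpa using affine 0 0
  | insert i s hi ih =>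
    simp only [Finset.sum_insert hi]
    exact (hf i (s.mem_insert_self i)).add (ih fun j hj => hf j (Finset.mem_insert_of_mem hj))

theorem continuous (hf : IsMinOfIntAffine f) : Continuous f := by
  obtain ⟨s, hs, hfs⟩ := hf
  rw [funext hfs]
  exact Continuous.finset_inf'_apply hs fun _ _ => by fun_prop

theorem chord_le (hf : IsMinOfIntAffine f) {x : ℝ} (hx : x ∈ Icc (0 : ℝ) 1) :
    (1 - x) * f 0 + x * f 1 ≤ f x := by
  obtain ⟨s, hs, hfs⟩ := hf
  obtain ⟨p, hp, hpx⟩ := Finset.exists_mem_eq_inf' hs fun va => va.2 + (va.1 : ℝ) * x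
  have h0 : f 0 ≤ p.2 + p.1 * 0 := hfs 0 ▸ Finset.inf'_le _ hp
  have h1 : f 1 ≤ p.2 + p.1 * 1 := hfs 1 ▸ Finset.inf'_le _ hp
  rw [hfs x, hpx]
  nlinarith [hx.1, hx.2]

theorem exists_int_eq_of_hasDerivAt (hf : IsMinOfIntAffine f) {x d : ℝ} (hd : HasDerivAt f d x) :
    ∃ n : ℤ, (n : ℝ) = d := by
  obtain ⟨s, hs, hfs⟩ := hf
  -- an affine piece active at `x` touches `f` from above there, so the slopes agree
  obtain ⟨p, hp, hpx⟩ := Finset.exists_mem_eq_inf' hs fun va => va.2 + (va.1 : ℝ) * x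
  have hmin : IsLocalMin (fun y => p.2 + p.1 * y - f y) x :=
    Filter.Eventually.of_forall fun y => by
      have := hfs y ▸ Finset.inf'_le (fun va : ℤ × ℝ => va.2 + (va.1 : ℝ) * y) hp
      simp only [hfs x, hpx, sub_self]
      linarith
  have hline : HasDerivAt (fun y => p.2 + p.1 * y) (p.1 : ℝ) x := by
    simpa using ((hasDerivAt_id x).const_mul (p.1 : ℝ)).const_add p.2
  exact ⟨p.1, by linarith [hmin.hasDerivAt_eq_zero (hline.sub hd)]⟩

theorem isTropPoly (hf : IsMinOfIntAffine f) (h0 : f 0 = 0) (h1 : f 1 = 0) : IsTropPoly f := by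
  refine ⟨h0, h1, fun x hx => by simpa [h0, h1] using hf.chord_le hx, ?_⟩
  obtain ⟨s, hs, hfs⟩ := hf
  exact ⟨s, hs, fun x _ => hfs x⟩

end IsMinOfIntAffine

theorem IsTropPoly.exists_isMinOfIntAffine_eqOn {F : ℝ → ℝ} (hF : IsTropPoly F) :
    ∃ g, IsMinOfIntAffine g ∧ EqOn F g (Icc 0 1) := by
  obtain ⟨-, -, -, s, hs, hFs⟩ := hF
  exact ⟨_, ⟨s, hs, fun _ => rfl⟩, hFs⟩

theorem hasDerivAt_of_hasDerivWithinAt_Iio_Ioi {f : ℝ → ℝ} {f' x : ℝ}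
    (hl : HasDerivWithinAt f f' (Iio x) x) (hr : HasDerivWithinAt f f' (Ioi x) x) :
    HasDerivAt f f' x := by
  have h := hl.union hr
  rwa [Iio_union_Ioi, compl_eq_univ_sdiff, hasDerivWithinAt_sdiff_singleton,
    hasDerivWithinAt_univ] at h

section Ramp

variable {h x : ℝ}

theorem hasDerivAt_max_sub_zero_of_lt (hx : h < x) :
    HasDerivAt (fun y => max (y - h) 0) 1 x :=
  ((hasDerivAt_id x).sub_const h).congr_of_eventuallyEq <| by
    filter_upwards [Ioi_mem_nhds hx] with y hy using max_eq_left (sub_nonneg.2 (le_of_lt hy))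

theorem hasDerivAt_max_sub_zero_of_gt (hx : x < h) :
    HasDerivAt (fun y => max (y - h) 0) 0 x :=
  (hasDerivAt_const x 0).congr_of_eventuallyEq <| by
    filter_upwards [Iio_mem_nhds hx] with y hy using max_eq_right (sub_nonpos.2 (le_of_lt hy))

theorem hasDerivWithinAt_max_sub_zero_Iio :
    HasDerivWithinAt (fun y => max (y - h) 0) (if h < x then 1 else 0) (Iio x) x := by
  split_ifs with hx
  · exact (hasDerivAt_max_sub_zero_of_lt hx).hasDerivWithinAt
  · push Not at hx
    refine (hasDerivWithinAt_const x _ 0).congr (fun y hy => ?_) ?_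
    · exact max_eq_right (by linarith [mem_Iio.1 hy])
    · exact max_eq_right (by linarith)

theorem hasDerivWithinAt_max_sub_zero_Ioi :
    HasDerivWithinAt (fun y => max (y - h) 0) (if h ≤ x then 1 else 0) (Ioi x) x := by
  split_ifs with hx
  · refine ((hasDerivAt_id x).sub_const h).hasDerivWithinAt.congr (fun y hy => ?_) ?_
    · exact max_eq_left (by linarith [mem_Ioi.1 hy])
    · exact max_eq_left (by linarith)
  · exact (hasDerivAt_max_sub_zero_of_gt (not_le.1 hx)).hasDerivWithinAt

end Ramp

def rampSum (t : Finset ℝ) (μ : ℝ → ℕ) (x : ℝ) : ℝ :=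
  ∑ h ∈ t, (μ h : ℝ) * max (x - h) 0

section RampSum

variable (t : Finset ℝ) (μ : ℝ → ℕ) (x : ℝ)

theorem hasDerivWithinAt_rampSum_Iio :
    HasDerivWithinAt (rampSum t μ) (∑ h ∈ t with h < x, (μ h : ℝ)) (Iio x) x := by
  have := HasDerivWithinAt.fun_sum fun h (_ : h ∈ t) =>
    (hasDerivWithinAt_max_sub_zero_Iio (h := h) (x := x)).const_mul (μ h : ℝ)
  unfold rampSum
  simpa [Finset.sum_filter] using this

theorem hasDerivWithinAt_rampSum_Ioi :
    HasDerivWithinAt (rampSum t μ) (∑ h ∈ t with h ≤ x, (μ h : ℝ)) (Ioi x) x := by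
  have := HasDerivWithinAt.fun_sum fun h (_ : h ∈ t) =>
    (hasDerivWithinAt_max_sub_zero_Ioi (h := h) (x := x)).const_mul (μ h : ℝ)
  unfold rampSum
  simpa [Finset.sum_filter] using this

variable {t μ}

theorem sum_filter_le_eq_sum_filter_lt_add (hμt : support μ ⊆ t) :
    ∑ h ∈ t with h ≤ x, (μ h : ℝ) = ∑ h ∈ t with h < x, (μ h : ℝ) + μ x := by
  simp_rw [le_iff_lt_or_eq, Finset.filter_or]
  rw [Finset.sum_union (Finset.disjoint_filter.2 fun h _ hlt heq => hlt.ne heq),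
    Finset.filter_eq']
  split_ifs with hx
  · simp
  · simp [notMem_support.1 fun h => hx (hμt h)]

theorem hasDerivAt_rampSum (hμt : support μ ⊆ t) (hx : μ x = 0) :
    HasDerivAt (rampSum t μ) (∑ h ∈ t with h < x, (μ h : ℝ)) x := by
  refine hasDerivAt_of_hasDerivWithinAt_Iio_Ioi (hasDerivWithinAt_rampSum_Iio t μ x) ?_
  simpa [sum_filter_le_eq_sum_filter_lt_add x hμt, hx] using hasDerivWithinAt_rampSum_Ioi t μ x

theorem rampSum_zero (ht : ∀ h ∈ t, 0 ≤ h) : rampSum t μ 0 = 0 :=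
  Finset.sum_eq_zero fun h hh => by simp [ht h hh]

theorem rampSum_one (ht : ∀ h ∈ t, h ≤ 1) : rampSum t μ 1 = ∑ h ∈ t, (μ h : ℝ) * (1 - h) :=
  Finset.sum_congr rfl fun h hh => by rw [max_eq_left (sub_nonneg.2 (ht h hh))]

theorem continuous_rampSum : Continuous (rampSum t μ) := by
  unfold rampSum; fun_prop

end RampSum

theorem Set.OrdConnected.subsingleton_image_deriv_of_countable {f : ℝ → ℝ} {s : Set ℝ}
    (hs : s.OrdConnected) (hf : ∀ x ∈ s, DifferentiableAt ℝ f x)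
    (hc : (deriv f '' s).Countable) : (deriv f '' s).Subsingleton := by
  intro u hu v hv
  have hIoo : Ioo (u ⊓ v) (u ⊔ v) ⊆ deriv f '' s :=
    Ioo_subset_Icc_self.trans <| (hs.image_deriv hf).uIcc_subset hu hv
  exact sup_le_inf.1 (Cardinal.Real.Ioo_countable_iff.1 (hc.mono hIoo))

section Breakpoints

variable {F : ℝ → ℝ} {μ : ℝ → ℕ} {t : Finset ℝ}

theorem IsBreakpointConfig.hasDerivAt_add_rampSum (hμ : IsBreakpointConfig F μ)
    (hμt : support μ ⊆ t) {x : ℝ} (hx : x ∈ Ioo (0 : ℝ) 1) :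
    ∃ d, HasDerivAt (fun y => F y + rampSum t μ y) d x := by
  obtain ⟨dl, dr, hl, hr, hjump⟩ := hμ x hx
  have hr' := hr.add (hasDerivWithinAt_rampSum_Ioi t μ x)
  rw [sum_filter_le_eq_sum_filter_lt_add x hμt,
    show dr + (∑ h ∈ t with h < x, (μ h : ℝ) + μ x) = dl + ∑ h ∈ t with h < x, (μ h : ℝ) by
      linarith] at hr'
  exact ⟨_, hasDerivAt_of_hasDerivWithinAt_Iio_Ioi
    (hl.add (hasDerivWithinAt_rampSum_Iio t μ x)) hr'⟩

theorem IsTropPoly.exists_int_eq_deriv_add_rampSum (hF : IsTropPoly F) (hμt : support μ ⊆ t)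
    {x : ℝ} (hx : x ∈ Ioo (0 : ℝ) 1) (hμx : μ x = 0)
    (hd : DifferentiableAt ℝ (fun y => F y + rampSum t μ y) x) :
    ∃ n : ℤ, (n : ℝ) = deriv (fun y => F y + rampSum t μ y) x := by
  obtain ⟨g, hg, hFg⟩ := hF.exists_isMinOfIntAffine_eqOn
  have hΦ := hasDerivAt_rampSum x hμt hμx
  have hFx : HasDerivAt F
      (deriv (fun y => F y + rampSum t μ y) x - ∑ h ∈ t with h < x, (μ h : ℝ)) x := by
    simpa using hd.hasDerivAt.fun_sub hΦ
  have hgx : HasDerivAt g _ x := hFx.congr_of_eventuallyEq <| by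
    filter_upwards [Ioo_mem_nhds hx.1 hx.2] with y hy using (hFg (Ioo_subset_Icc_self hy)).symm
  obtain ⟨n, hn⟩ := hg.exists_int_eq_of_hasDerivAt hgx
  exact ⟨n + ∑ h ∈ t with h < x, (μ h : ℤ), by push_cast; linarith⟩

theorem IsBreakpointConfig.exists_int_sum_eq (hF : IsTropPoly F) (hμ : IsBreakpointConfig F μ)
    (hμt : support μ ⊆ t) (ht : ↑t ⊆ Icc (0 : ℝ) 1) :
    ∃ z : ℤ, ∑ h ∈ t, (μ h : ℝ) * h = z := by
  set G := fun y => F y + rampSum t μ y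
  have hG : ∀ x ∈ Ioo (0 : ℝ) 1, DifferentiableAt ℝ G x := fun x hx =>
    (hμ.hasDerivAt_add_rampSum hμt hx).elim fun _ hd => hd.differentiableAt
  have hcount : (deriv G '' Ioo 0 1).Countable := by
    refine ((countable_range ((↑) : ℤ → ℝ)).union
      (t.finite_toSet.image (deriv G)).countable).mono ?_
    rintro _ ⟨x, hx, rfl⟩
    by_cases hμx : μ x = 0
    · obtain ⟨n, hn⟩ := hF.exists_int_eq_deriv_add_rampSum hμt hx hμx (hG x hx)
      exact Or.inl ⟨n, hn⟩
    · exact Or.inr ⟨x, hμt hμx, rfl⟩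
  have hconst := ordConnected_Ioo.subsingleton_image_deriv_of_countable hG hcount
  obtain ⟨x₀, hx₀, hμx₀⟩ : ∃ x ∈ Ioo (0 : ℝ) 1, μ x = 0 := by
    obtain ⟨x, hx, hxt⟩ := ((Ioo_infinite zero_lt_one).sdiff t.finite_toSet).nonempty
    exact ⟨x, hx, by_contra fun h => hxt (hμt h)⟩
  obtain ⟨n, hn⟩ := hF.exists_int_eq_deriv_add_rampSum hμt hx₀ hμx₀ (hG x₀ hx₀)
  have hGcont : ContinuousOn G (Icc 0 1) := by
    obtain ⟨g, hg, hFg⟩ := hF.exists_isMinOfIntAffine_eqOn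
    exact (hg.continuous.continuousOn.congr hFg).add continuous_rampSum.continuousOn
  obtain ⟨c, hc, hslope⟩ :=
    exists_deriv_eq_slope G zero_lt_one hGcont fun x hx => (hG x hx).differentiableWithinAt
  have hG1 : G 1 - G 0 = n := by
    rw [hn, hconst ⟨x₀, hx₀, rfl⟩ ⟨c, hc, rfl⟩, hslope, sub_zero, div_one]
  have hΦ0 := rampSum_zero (μ := μ) fun h hh => (ht hh).1
  have hΦ1 := rampSum_one (μ := μ) fun h hh => (ht hh).2
  refine ⟨∑ h ∈ t, (μ h : ℤ) - n, ?_⟩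
  simp only [G, hF.1, hF.2.1, hΦ0, hΦ1, mul_one_sub, Finset.sum_sub_distrib] at hG1
  push_cast
  linarith

theorem exists_isTropPoly_isBreakpointConfig (hμt : support μ ⊆ t) (ht : ↑t ⊆ Icc (0 : ℝ) 1)
    {z : ℤ} (hz : ∑ h ∈ t, (μ h : ℝ) * h = z) :
    ∃ F, IsTropPoly F ∧ IsBreakpointConfig F μ := by
  set m : ℤ := ∑ h ∈ t, (μ h : ℤ) - z
  have hrepr : IsMinOfIntAffine fun x => m * x - rampSum t μ x := by
    have := (IsMinOfIntAffine.affine m 0).add <| IsMinOfIntAffine.sum t fun h _ =>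
      (IsMinOfIntAffine.affine (-(μ h : ℤ)) (μ h * h)).min (IsMinOfIntAffine.affine 0 0)
    convert this using 2 with x
    rw [rampSum, sub_eq_add_neg, zero_add, ← Finset.sum_neg_distrib]
    refine congrArg _ (Finset.sum_congr rfl fun h _ => ?_)
    rw [mul_max_of_nonneg _ _ (Nat.cast_nonneg _), mul_zero, ← min_neg_neg]
    push_cast
    ring_nf
  refine ⟨_, hrepr.isTropPoly ?_ ?_, fun x _ =>
    ⟨m - ∑ h ∈ t with h < x, (μ h : ℝ), m - ∑ h ∈ t with h ≤ x, (μ h : ℝ), ?_, ?_, ?_⟩⟩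
  · simp [rampSum_zero (μ := μ) fun h hh => (ht hh).1]
  · rw [rampSum_one fun h hh => (ht hh).2]
    simp only [m, mul_one_sub, Finset.sum_sub_distrib, hz]
    push_cast
    ring
  · simpa using ((hasDerivAt_id x).const_mul (m : ℝ)).hasDerivWithinAt.fun_sub
      (hasDerivWithinAt_rampSum_Iio t μ x)
  · simpa using ((hasDerivAt_id x).const_mul (m : ℝ)).hasDerivWithinAt.fun_sub
      (hasDerivWithinAt_rampSum_Ioi t μ x)
  · rw [sum_filter_le_eq_sum_filter_lt_add x hμt]
    ring

end Breakpoints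

/-- A finitely supported `μ : ℝ → ℕ` with support in `(0,1)` is the
breakpoint configuration of some `[0,1]`-tropical polynomial iff `Σ_h μ(h)·h ∈ ℤ`. -/
theorem breakpoint_config_iff_integer_weighted_sum (μ : ℝ → ℕ)
    (hfin : (Function.support μ).Finite)
    (hsub : Function.support μ ⊆ Set.Ioo (0 : ℝ) 1) :
    (∃ F : ℝ → ℝ, IsTropPoly F ∧ IsBreakpointConfig F μ) ↔
      ∃ z : ℤ, (∑ᶠ h, (μ h : ℝ) * h) = (z : ℝ) := by
  have hμt : support μ ⊆ hfin.toFinset := hfin.coe_toFinset.symm.subset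
  have ht : ↑hfin.toFinset ⊆ Icc (0 : ℝ) 1 := fun h hh =>
    Ioo_subset_Icc_self (hsub (hfin.mem_toFinset.1 hh))
  rw [finsum_eq_sum_of_support_subset (fun h => (μ h : ℝ) * h) fun h hh =>
    hμt (Nat.cast_ne_zero.1 (left_ne_zero_of_mul (mem_support.1 hh)))]
  constructor
  · rintro ⟨F, hF, hμ⟩
    exact hμ.exists_int_sum_eq hF hμt ht
  · rintro ⟨z, hz⟩
    exact exists_isTropPoly_isBreakpointConfig hμt ht hz
end

section
/- If a configuration μ satisfies μ(h) ≤ 2 for all h ∈ ℝ, then for every p ∈ (0,1) the configuration G_p μ also satisfies (G_p μ)(h) ≤ 2 for all h. Consequently, in any relaxation sequence starting from the zero configuration (μ_0 = 0, μ_{m+1} = G_{p_{k(m)}} μ_m for points p_{k(m)} ∈ (0,1)), every configuration μ_m takes only values in {0, 1, 2}: the toppling operator never produces points with multiplicity greater than 2. -/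
open Classical MeasureTheory Function Set

/-- A configuration: a finitely supported `ℝ → ℕ` with support in `(0,1)`. -/
def IsConfig (μ : ℝ → ℕ) : Prop :=
  (Function.support μ).Finite ∧ Function.support μ ⊆ Set.Ioo (0 : ℝ) 1

/-- Total mass `Σ_h μ(h)` of a configuration. -/
noncomputable def totalMass (μ : ℝ → ℕ) : ℕ := ∑ᶠ h, μ h

/-- Weighted sum `Σ_h μ(h)·h` of a configuration. -/
noncomputable def weightedSum (μ : ℝ → ℕ) : ℝ := ∑ᶠ h, (μ h : ℝ) * h

/-- A configuration is admissible if `Σ_h μ(h)·h` is an integer. -/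
def Admissible (μ : ℝ → ℕ) : Prop := IsConfig μ ∧ ∃ z : ℤ, weightedSum μ = (z : ℝ)

/-- The toppling operator `G_p`. -/
noncomputable def topple (p : ℝ) (μ : ℝ → ℕ) : ℝ → ℕ :=
  if 1 ≤ μ p then μ
  else
    let a := sSup ({0} ∪ {h | 1 ≤ μ h ∧ h < p})
    let b := sInf ({1} ∪ {h | 1 ≤ μ h ∧ p < h})
    let c := min (p - a) (b - p)
    fun x =>
      μ x + (if x = a + c then 1 else 0) + (if x = b - c then 1 else 0)
        - (if x = a ∧ 0 < a then 1 else 0) - (if x = b ∧ b < 1 then 1 else 0)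

/-- `μ` is the (necessarily unique) admissible configuration of minimal total mass
whose support contains `P`. -/
def IsMinimalConfig (P : Set ℝ) (μ : ℝ → ℕ) : Prop :=
  Admissible μ ∧ (∀ p ∈ P, 1 ≤ μ p) ∧
    ∀ ν : ℝ → ℕ, Admissible ν → (∀ p ∈ P, 1 ≤ ν p) → totalMass μ ≤ totalMass ν

/-!
If `μ p = 0`, the two new chips land at `a + c` and `b - c`, strictly inside the gap `(a, b)`
between the support points of `μ` nearest to `p`; `μ` vanishes there, so a site that gains
chips was empty and gains at most two. Every other site can only lose chips. As `G_p` maps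
configurations to configurations, the bound propagates along relaxation sequences by induction.
-/

noncomputable def leftNeighbor (μ : ℝ → ℕ) (p : ℝ) : ℝ := sSup ({0} ∪ {h | 1 ≤ μ h ∧ h < p})

noncomputable def rightNeighbor (μ : ℝ → ℕ) (p : ℝ) : ℝ := sInf ({1} ∪ {h | 1 ≤ μ h ∧ p < h})

noncomputable def toppleRadius (μ : ℝ → ℕ) (p : ℝ) : ℝ :=
  min (p - leftNeighbor μ p) (rightNeighbor μ p - p)

section Neighbors

variable {μ : ℝ → ℕ} {p : ℝ}

lemma finite_left_set (hfin : (support μ).Finite) : ({0} ∪ {h | 1 ≤ μ h ∧ h < p}).Finite :=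
  (finite_singleton 0).union <| hfin.subset fun _ hh => Nat.one_le_iff_ne_zero.mp hh.1

lemma finite_right_set (hfin : (support μ).Finite) : ({1} ∪ {h | 1 ≤ μ h ∧ p < h}).Finite :=
  (finite_singleton 1).union <| hfin.subset fun _ hh => Nat.one_le_iff_ne_zero.mp hh.1

lemma leftNeighbor_mem (hfin : (support μ).Finite) :
    leftNeighbor μ p ∈ ({0} ∪ {h | 1 ≤ μ h ∧ h < p}) :=
  (singleton_nonempty 0).inl.csSup_mem (finite_left_set hfin)

lemma rightNeighbor_mem (hfin : (support μ).Finite) :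
    rightNeighbor μ p ∈ ({1} ∪ {h | 1 ≤ μ h ∧ p < h}) :=
  (singleton_nonempty 1).inl.csInf_mem (finite_right_set hfin)

lemma le_leftNeighbor (hfin : (support μ).Finite) {h : ℝ}
    (hh : h ∈ ({0} ∪ {h | 1 ≤ μ h ∧ h < p})) : h ≤ leftNeighbor μ p :=
  le_csSup (finite_left_set hfin).bddAbove hh

lemma rightNeighbor_le (hfin : (support μ).Finite) {h : ℝ}
    (hh : h ∈ ({1} ∪ {h | 1 ≤ μ h ∧ p < h})) : rightNeighbor μ p ≤ h :=
  csInf_le (finite_right_set hfin).bddBelow hh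

lemma leftNeighbor_lt (hfin : (support μ).Finite) (hp : 0 < p) : leftNeighbor μ p < p := by
  rcases leftNeighbor_mem hfin with h | h
  · rwa [mem_singleton_iff.mp h]
  · exact h.2

lemma lt_rightNeighbor (hfin : (support μ).Finite) (hp : p < 1) : p < rightNeighbor μ p := by
  rcases rightNeighbor_mem hfin with h | h
  · rwa [mem_singleton_iff.mp h]
  · exact h.2

lemma eq_zero_of_mem_Ioo_neighbors (hfin : (support μ).Finite) (hμp : μ p = 0) {x : ℝ}
    (hx : x ∈ Ioo (leftNeighbor μ p) (rightNeighbor μ p)) : μ x = 0 := by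
  by_contra hne
  have hx₁ : 1 ≤ μ x := Nat.one_le_iff_ne_zero.mpr hne
  rcases lt_trichotomy x p with hxp | rfl | hpx
  · exact hx.1.not_ge (le_leftNeighbor hfin (Or.inr ⟨hx₁, hxp⟩))
  · exact hne hμp
  · exact hx.2.not_ge (rightNeighbor_le hfin (Or.inr ⟨hx₁, hpx⟩))

lemma toppleRadius_pos (hfin : (support μ).Finite) (hp : p ∈ Ioo 0 1) : 0 < toppleRadius μ p :=
  lt_min (sub_pos.mpr (leftNeighbor_lt hfin hp.1)) (sub_pos.mpr (lt_rightNeighbor hfin hp.2))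

lemma add_toppleRadius_mem_Ioo (hfin : (support μ).Finite) (hp : p ∈ Ioo 0 1) :
    leftNeighbor μ p + toppleRadius μ p ∈ Ioo (leftNeighbor μ p) (rightNeighbor μ p) := by
  have hc := toppleRadius_pos hfin hp
  have hcle : toppleRadius μ p ≤ p - leftNeighbor μ p := min_le_left _ _
  have := lt_rightNeighbor hfin hp.2
  constructor <;> linarith

lemma sub_toppleRadius_mem_Ioo (hfin : (support μ).Finite) (hp : p ∈ Ioo 0 1) :
    rightNeighbor μ p - toppleRadius μ p ∈ Ioo (leftNeighbor μ p) (rightNeighbor μ p) := by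
  have hc := toppleRadius_pos hfin hp
  have hcle : toppleRadius μ p ≤ rightNeighbor μ p - p := min_le_right _ _
  have := leftNeighbor_lt hfin hp.1
  constructor <;> linarith

lemma Ioo_neighbors_subset (hfin : (support μ).Finite) :
    Ioo (leftNeighbor μ p) (rightNeighbor μ p) ⊆ Ioo 0 1 :=
  Ioo_subset_Ioo (le_leftNeighbor hfin (Or.inl rfl)) (rightNeighbor_le hfin (Or.inl rfl))

end Neighbors

section Topple

variable {μ : ℝ → ℕ} {p : ℝ}

lemma topple_of_one_le (hμp : 1 ≤ μ p) : topple p μ = μ := if_pos hμp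

lemma topple_apply_le (hμp : μ p = 0) (x : ℝ) :
    topple p μ x ≤ μ x + (if x = leftNeighbor μ p + toppleRadius μ p then 1 else 0)
      + (if x = rightNeighbor μ p - toppleRadius μ p then 1 else 0) := by
  rw [topple, if_neg (by omega)]
  exact (Nat.sub_le _ _).trans (Nat.sub_le _ _)

lemma support_topple_subset (μ : ℝ → ℕ) (p : ℝ) :
    support (topple p μ) ⊆ support μ ∪
      {leftNeighbor μ p + toppleRadius μ p, rightNeighbor μ p - toppleRadius μ p} := by
  rcases Nat.eq_zero_or_pos (μ p) with hμp | hμp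
  · intro x hx
    by_contra hmem
    simp only [mem_union, mem_insert_iff, mem_singleton_iff, mem_support, not_or,
      not_not] at hmem
    obtain ⟨hμx, hx₁, hx₂⟩ := hmem
    have := topple_apply_le hμp x
    simp only [hμx, if_neg hx₁, if_neg hx₂] at this
    exact hx (by omega)
  · rw [topple_of_one_le hμp]
    exact subset_union_left

theorem IsConfig.topple (hμ : IsConfig μ) (hp : p ∈ Ioo 0 1) : IsConfig (topple p μ) := by
  refine ⟨(hμ.1.union (toFinite _)).subset (support_topple_subset μ p), ?_⟩
  refine (support_topple_subset μ p).trans (union_subset hμ.2 ?_)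
  rintro x (rfl | rfl)
  · exact Ioo_neighbors_subset hμ.1 (add_toppleRadius_mem_Ioo hμ.1 hp)
  · exact Ioo_neighbors_subset hμ.1 (sub_toppleRadius_mem_Ioo hμ.1 hp)

lemma topple_apply_le_two (hfin : (support μ).Finite) (hp : p ∈ Ioo 0 1)
    (hμ₂ : ∀ h, μ h ≤ 2) (x : ℝ) : topple p μ x ≤ 2 := by
  rcases Nat.eq_zero_or_pos (μ p) with hμp | hμp
  · have hle := topple_apply_le hμp x
    by_cases hx : x = leftNeighbor μ p + toppleRadius μ p ∨
        x = rightNeighbor μ p - toppleRadius μ p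
    · have hμx : μ x = 0 := by
        refine eq_zero_of_mem_Ioo_neighbors hfin hμp ?_
        rcases hx with rfl | rfl
        · exact add_toppleRadius_mem_Ioo hfin hp
        · exact sub_toppleRadius_mem_Ioo hfin hp
      split_ifs at hle <;> omega
    · rw [not_or] at hx
      rw [if_neg hx.1, if_neg hx.2] at hle
      exact hle.trans (hμ₂ x)
  · rw [topple_of_one_le hμp]
    exact hμ₂ x

end Topple

/-- Toppling never produces multiplicities greater than `2`: if a
configuration is bounded by `2`, so is its image under any `G_p` with `p ∈ (0,1)`;
consequently every term of a relaxation sequence started at the zero configuration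
takes values in `{0, 1, 2}`. -/
theorem topple_le_two :
    (∀ (μ : ℝ → ℕ), IsConfig μ → (∀ h, μ h ≤ 2) →
      ∀ p ∈ Set.Ioo (0 : ℝ) 1, ∀ h, topple p μ h ≤ 2) ∧
    (∀ (k : ℕ → ℝ), (∀ m, k m ∈ Set.Ioo (0 : ℝ) 1) →
      ∀ (μ : ℕ → ℝ → ℕ), μ 0 = (fun _ => 0) →
        (∀ m, μ (m + 1) = topple (k m) (μ m)) →
        ∀ m h, μ m h ≤ 2) := by
  refine ⟨fun μ hμ hμ₂ p hp => topple_apply_le_two hμ.1 hp hμ₂, ?_⟩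
  intro k hk μ hμ₀ hstep
  have hinv : ∀ m, IsConfig (μ m) ∧ ∀ h, μ m h ≤ 2 := by
    intro m
    induction m with
    | zero => simp [hμ₀, IsConfig]
    | succ m ih =>
      rw [hstep m]
      exact ⟨ih.1.topple (hk m), topple_apply_le_two ih.1.1 (hk m) ih.2⟩
  exact fun m => (hinv m).2
end

section
/- The set {(p, q) ∈ (0,1)² : p ≠ q and L(p, q) = 1} has two-dimensional Lebesgue measure 1/4. -/
open Classical MeasureTheory Function Set

/-- One full round of topplings `G_{p_n} ∘ ⋯ ∘ G_{p_1}` for `ps = [p_1, …, p_n]`. -/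
noncomputable def relaxRound (ps : List ℝ) (μ : ℝ → ℕ) : ℝ → ℕ :=
  ps.foldl (fun ν x => topple x ν) μ

/-- The length of relaxation `L(p_1, …, p_n)`: the least `N ≥ 1` such that
`(G_{p_n} ∘ ⋯ ∘ G_{p_1})^N` applied to the zero configuration is the unique
admissible configuration of minimal total mass whose support contains all the `pᵢ`. -/
noncomputable def relaxLength (ps : List ℝ) : ℕ :=
  sInf {N | 1 ≤ N ∧ IsMinimalConfig {x | x ∈ ps} ((relaxRound ps)^[N] fun _ => 0)}

/-- The locus of pairs `(p, q)` of distinct points of `(0,1)` with relaxation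
length `N`. -/
def lengthLocus (N : ℕ) : Set (ℝ × ℝ) :=
  {x : ℝ × ℝ | x.1 ∈ Set.Ioo (0 : ℝ) 1 ∧ x.2 ∈ Set.Ioo (0 : ℝ) 1 ∧ x.1 ≠ x.2 ∧
    relaxLength [x.1, x.2] = N}

/-! The first toppling gives `G_p 0 = δ_p + δ_{1-p}`. Toppling at an empty point `q` whose
neighbours in the support (or `0`, `1`) are `a < q < b` removes `a` and `b`, unless they are
`0` or `1`, and adds `q` and its mirror image `a + b - q`. If `1 - p` lies between `p` and `q`
(the triangles `1/2 < p, q < 1 - p` and `p < 1/2, 1 - p < q`, of total area `1/4`), only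
`1 - p` is removed, and the resulting three-point configuration is admissible and minimal since
`δ_p + δ_q` is not admissible. Otherwise `p` itself is a neighbour of `q` and is removed, so
`L(p, q) > 1`. The lines `p = 1/2` and `p + q = 1` that escape this dichotomy are null. -/

noncomputable def ofMultiset (s : Multiset ℝ) : ℝ → ℕ := fun x => s.count x

section ofMultiset

variable {s : Multiset ℝ}

lemma support_ofMultiset : support (ofMultiset s) = ↑s.toFinset := by
  ext x; simp [ofMultiset]

lemma totalMass_ofMultiset : totalMass (ofMultiset s) = Multiset.card s := by
  rw [totalMass, finsum_eq_sum_of_support_subset _ support_ofMultiset.subset]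
  exact Multiset.toFinset_sum_count_eq s

lemma weightedSum_ofMultiset : weightedSum (ofMultiset s) = s.sum := by
  rw [weightedSum, finsum_eq_sum_of_support_subset (s := s.toFinset) _
    (fun x hx => by by_contra h; simp_all [ofMultiset]),
    Finset.sum_multiset_count]
  simp [ofMultiset]

lemma isConfig_ofMultiset (hs : ∀ x ∈ s, x ∈ Ioo (0 : ℝ) 1) : IsConfig (ofMultiset s) := by
  rw [IsConfig, support_ofMultiset]
  exact ⟨Finset.finite_toSet _, fun x hx => hs x (by simpa using hx)⟩

lemma ofMultiset_le (hs : s.Nodup) {ν : ℝ → ℕ} (hν : ∀ x ∈ s, 1 ≤ ν x) : ofMultiset s ≤ ν := by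
  intro x
  by_cases hx : x ∈ s
  · exact (Multiset.nodup_iff_count_le_one.mp hs x).trans (hν x hx)
  · simp [ofMultiset, hx]

end ofMultiset

lemma eq_of_le_of_totalMass_le {μ ν : ℝ → ℕ} (hν : (support ν).Finite) (hle : μ ≤ ν)
    (hmass : totalMass ν ≤ totalMass μ) : μ = ν := by
  have hsupp : support μ ⊆ ↑hν.toFinset := by
    intro x hx
    simpa using (Nat.pos_of_ne_zero hx).trans_le (hle x) |>.ne'
  rw [totalMass, totalMass, finsum_eq_sum_of_support_subset (s := hν.toFinset) _ (by simp),
    finsum_eq_sum_of_support_subset _ hsupp] at hmass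
  have heq := (Finset.sum_eq_sum_iff_of_le fun x _ => hle x).mp
    (le_antisymm (Finset.sum_le_sum fun x _ => hle x) hmass)
  funext x
  by_cases hx : x ∈ hν.toFinset
  · exact heq x hx
  · have hνx : ν x = 0 := by simpa using hx
    exact Nat.eq_zero_of_le_zero (hνx ▸ hle x) |>.trans hνx.symm

lemma isMinimalConfig_ofMultiset_triple {p q r : ℝ} (hp : p ∈ Ioo (0 : ℝ) 1)
    (hq : q ∈ Ioo (0 : ℝ) 1) (hr : r ∈ Ioo (0 : ℝ) 1) (hpq : p ≠ q) (hpq1 : p + q ≠ 1)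
    (hsum : ∃ z : ℤ, p + q + r = z) :
    IsMinimalConfig {p, q} (ofMultiset {p, q, r}) := by
  have hconfig : IsConfig (ofMultiset {p, q, r}) := isConfig_ofMultiset (by
    simp only [Multiset.insert_eq_cons, Multiset.mem_cons, Multiset.mem_singleton]
    rintro x (rfl | rfl | rfl) <;> assumption)
  refine ⟨⟨hconfig, by simpa [weightedSum_ofMultiset, add_assoc] using hsum⟩,
    by simp [ofMultiset, Multiset.one_le_count_iff_mem], fun ν ⟨⟨hνfin, _⟩, w, hw⟩ hν => ?_⟩
  rw [totalMass_ofMultiset]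
  by_contra! hlt
  have hpair : ofMultiset {p, q} = ν := by
    refine eq_of_le_of_totalMass_le hνfin (ofMultiset_le (by simp [hpq]) (by simpa using hν)) ?_
    rw [totalMass_ofMultiset]
    simpa [Nat.lt_succ_iff] using hlt
  rw [← hpair, weightedSum_ofMultiset] at hw
  simp only [Multiset.insert_eq_cons, Multiset.sum_cons, Multiset.sum_singleton] at hw
  have h0 : (0 : ℤ) < w := by exact_mod_cast (show (0 : ℝ) < w by linarith [hp.1, hq.1])
  have h2 : w < 2 := by exact_mod_cast (show (w : ℝ) < 2 by linarith [hp.2, hq.2])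
  exact hpq1 (by rw [hw]; exact_mod_cast (by omega : w = 1))

section Topple

variable {μ : ℝ → ℕ} {a b q : ℝ}

lemma topple_eq_of_gap (ha : a = 0 ∨ 1 ≤ μ a) (hb : b = 1 ∨ 1 ≤ μ b) (ha0 : 0 ≤ a)
    (hb1 : b ≤ 1) (haq : a < q) (hqb : q < b) (hgap : ∀ h ∈ Ioo a b, μ h = 0) :
    topple q μ = fun x => μ x + (if x = q then 1 else 0) + (if x = a + b - q then 1 else 0)
      - (if x = a ∧ 0 < a then 1 else 0) - (if x = b ∧ b < 1 then 1 else 0) := by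
  have hsSup : sSup ({0} ∪ {h | 1 ≤ μ h ∧ h < q}) = a := by
    refine IsGreatest.csSup_eq ⟨?_, ?_⟩
    · rcases ha with rfl | ha
      exacts [Or.inl rfl, Or.inr ⟨ha, haq⟩]
    · rintro h (rfl | ⟨hh, hhq⟩)
      · exact ha0
      · by_contra! hah
        simp [hgap h ⟨hah, hhq.trans hqb⟩] at hh
  have hsInf : sInf ({1} ∪ {h | 1 ≤ μ h ∧ q < h}) = b := by
    refine IsLeast.csInf_eq ⟨?_, ?_⟩
    · rcases hb with rfl | hb
      exacts [Or.inl rfl, Or.inr ⟨hb, hqb⟩]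
    · rintro h (rfl | ⟨hh, hqh⟩)
      · exact hb1
      · by_contra! hhb
        simp [hgap h ⟨haq.trans hqh, hhb⟩] at hh
  simp only [topple, hgap q ⟨haq, hqb⟩, hsSup, hsInf]
  funext x
  -- the two new points are `q` and its reflection `a + b - q` in the midpoint of `(a, b)`
  rcases le_total (q - a) (b - q) with h | h
  · rw [min_eq_left h, show a + (q - a) = q by ring, show b - (q - a) = a + b - q by ring]
    simp
  · rw [min_eq_right h, show a + (b - q) = a + b - q by ring, show b - (b - q) = q by ring]
    simp [add_right_comm]

lemma topple_apply_of_gap_eq_zero {p : ℝ} (ha : a = 0 ∨ 1 ≤ μ a)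
    (hb : b = 1 ∨ 1 ≤ μ b) (ha0 : 0 ≤ a) (hb1 : b ≤ 1) (haq : a < q) (hqb : q < b)
    (hgap : ∀ h ∈ Ioo a b, μ h = 0) (hp : p = a ∨ p = b) (hp01 : p ∈ Ioo (0 : ℝ) 1)
    (hμp : μ p = 1) : topple q μ p = 0 := by
  rw [topple_eq_of_gap ha hb ha0 hb1 haq hqb hgap]
  rcases hp with rfl | rfl
  · simp [hμp, haq.ne, (haq.trans hqb).ne, hp01.1, show p ≠ p + b - q by linarith]
  · simp [hμp, hqb.ne', (haq.trans hqb).ne', hp01.2, show p ≠ a + p - q by linarith]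

end Topple

lemma topple_zero {p : ℝ} (hp : p ∈ Ioo (0 : ℝ) 1) :
    topple p (fun _ => 0) = ofMultiset {p, 1 - p} := by
  rw [topple_eq_of_gap (Or.inl rfl) (Or.inl rfl) le_rfl le_rfl hp.1 hp.2 fun _ _ => rfl]
  funext x
  simp [ofMultiset, Multiset.count_cons, Multiset.count_singleton, add_comm]

lemma relaxLength_eq_one_iff (ps : List ℝ) :
    relaxLength ps = 1 ↔ IsMinimalConfig {x | x ∈ ps} (relaxRound ps fun _ => 0) := by
  rw [relaxLength]
  set S := {N | 1 ≤ N ∧ IsMinimalConfig {x | x ∈ ps} ((relaxRound ps)^[N] fun _ => 0)}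
  constructor
  · intro h
    have hS := (Nat.sInf_mem (Nat.nonempty_of_pos_sInf (h ▸ one_pos))).2
    rwa [h, iterate_one] at hS
  · intro h
    have h1 : 1 ∈ S := ⟨le_rfl, h⟩
    exact le_antisymm (Nat.sInf_le h1) (Nat.sInf_mem ⟨1, h1⟩).1

lemma relaxLength_pair_eq_one_iff {p q : ℝ} (hp : p ∈ Ioo (0 : ℝ) 1) :
    relaxLength [p, q] = 1 ↔ IsMinimalConfig {p, q} (topple q (ofMultiset {p, 1 - p})) := by
  rw [relaxLength_eq_one_iff, relaxRound]
  simp [topple_zero hp, Set.insert_def]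

section PairConfig

variable {p q : ℝ}

lemma ofMultiset_pair_eq_zero {p' a b : ℝ} (hp : p ∉ Ioo a b) (hp' : p' ∉ Ioo a b) :
    ∀ h ∈ Ioo a b, ofMultiset {p, p'} h = 0 := by
  intro h hh
  simp only [ofMultiset, Multiset.insert_eq_cons, Multiset.count_eq_zero, Multiset.mem_cons,
    Multiset.mem_singleton, not_or]
  constructor <;> rintro rfl <;> contradiction

lemma one_le_ofMultiset_pair {p' x : ℝ} (hx : x = p ∨ x = p') : 1 ≤ ofMultiset {p, p'} x := by
  simpa [ofMultiset, Multiset.one_le_count_iff_mem] using hx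

lemma relaxLength_eq_one_of_lt_one_sub (hp : 1 / 2 < p) (hp1 : p < 1) (hq : 0 < q)
    (hqp : q < 1 - p) : relaxLength [p, q] = 1 := by
  have htopple : topple q (ofMultiset {p, 1 - p}) = ofMultiset {p, q, 1 - p - q} := by
    rw [topple_eq_of_gap (Or.inl rfl) (Or.inr (one_le_ofMultiset_pair (Or.inr rfl))) le_rfl
      (by linarith) hq hqp (ofMultiset_pair_eq_zero (by rintro ⟨_, _⟩; linarith)
        (by rintro ⟨_, _⟩; linarith))]
    funext x
    simp only [ofMultiset, Multiset.insert_eq_cons, Multiset.count_cons, Multiset.count_singleton,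
      zero_add, lt_self_iff_false, and_false, show 1 - p < 1 by linarith, and_true, ↓reduceIte]
    split_ifs <;> omega
  rw [relaxLength_pair_eq_one_iff ⟨by linarith, hp1⟩, htopple]
  exact isMinimalConfig_ofMultiset_triple ⟨by linarith, hp1⟩ ⟨hq, by linarith⟩
    ⟨by linarith, by linarith⟩ (by linarith) (by linarith) ⟨1, by push_cast; ring⟩

lemma relaxLength_eq_one_of_one_sub_lt (hp0 : 0 < p) (hp : p < 1 / 2) (hpq : 1 - p < q)
    (hq1 : q < 1) : relaxLength [p, q] = 1 := by
  have htopple : topple q (ofMultiset {p, 1 - p}) = ofMultiset {p, q, 2 - p - q} := by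
    rw [topple_eq_of_gap (Or.inr (one_le_ofMultiset_pair (Or.inr rfl))) (Or.inl rfl)
      (by linarith) le_rfl hpq hq1 (ofMultiset_pair_eq_zero (by rintro ⟨_, _⟩; linarith)
        (by rintro ⟨_, _⟩; linarith))]
    funext x
    simp only [ofMultiset, Multiset.insert_eq_cons, Multiset.count_cons, Multiset.count_singleton,
      show 1 - p + 1 - q = 2 - p - q by ring, lt_self_iff_false, and_false,
      show 0 < 1 - p by linarith, and_true, ↓reduceIte]
    split_ifs <;> omega
  rw [relaxLength_pair_eq_one_iff ⟨hp0, by linarith⟩, htopple]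
  exact isMinimalConfig_ofMultiset_triple ⟨hp0, by linarith⟩ ⟨by linarith, hq1⟩
    ⟨by linarith, by linarith⟩ (by linarith) (by linarith) ⟨2, by push_cast; ring⟩

lemma relaxLength_ne_one (hp : p ∈ Ioo (0 : ℝ) 1) (hq : q ∈ Ioo (0 : ℝ) 1) (hpq : p ≠ q)
    (hp2 : p ≠ 1 / 2) (hpq1 : p + q ≠ 1)
    (hgood : ¬((1 / 2 < p ∧ q < 1 - p) ∨ (p < 1 / 2 ∧ 1 - p < q))) :
    relaxLength [p, q] ≠ 1 := by
  -- `p` is a neighbour of `q` in the support `{p, 1 - p}`, so toppling at `q` removes it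
  suffices h : topple q (ofMultiset {p, 1 - p}) p = 0 by
    rw [Ne, relaxLength_pair_eq_one_iff hp]
    intro hmin
    exact absurd (hmin.2.1 p (mem_insert p _)) (by rw [h]; norm_num)
  have hμp : ofMultiset {p, 1 - p} p = 1 := by
    simp [ofMultiset, show p ≠ 1 - p by intro h; apply hp2; linarith]
  have h1 := one_le_ofMultiset_pair (p := p) (p' := 1 - p) (Or.inl rfl)
  have h2 := one_le_ofMultiset_pair (p := p) (p' := 1 - p) (Or.inr rfl)
  have hout {x a b : ℝ} (h : x ≤ a ∨ b ≤ x) : x ∉ Ioo a b := by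
    rintro ⟨_, _⟩; rcases h with h | h <;> linarith
  simp only [not_or, not_and, not_lt] at hgood
  rcases lt_or_gt_of_ne hp2 with hp2 | hp2 <;> rcases lt_or_gt_of_ne hpq with hpq | hpq
  · have hq' : q < 1 - p := lt_of_le_of_ne (hgood.2 hp2) (by intro h; apply hpq1; linarith)
    exact topple_apply_of_gap_eq_zero (Or.inr h1) (Or.inr h2) hp.1.le (by linarith [hp.1])
      hpq hq' (ofMultiset_pair_eq_zero (hout (Or.inl le_rfl)) (hout (Or.inr le_rfl)))
      (Or.inl rfl) hp hμp
  · exact topple_apply_of_gap_eq_zero (Or.inl rfl) (Or.inr h1) le_rfl hp.2.le hq.1 hpq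
      (ofMultiset_pair_eq_zero (hout (Or.inr le_rfl)) (hout (Or.inr (by linarith))))
      (Or.inr rfl) hp hμp
  · exact topple_apply_of_gap_eq_zero (Or.inr h1) (Or.inl rfl) hp.1.le le_rfl hpq hq.2
      (ofMultiset_pair_eq_zero (hout (Or.inl le_rfl)) (hout (Or.inl (by linarith))))
      (Or.inl rfl) hp hμp
  · have hq' : 1 - p < q := lt_of_le_of_ne (hgood.1 hp2) (by intro h; apply hpq1; linarith)
    exact topple_apply_of_gap_eq_zero (Or.inr h2) (Or.inr h1) (by linarith [hp.2]) hp.2.le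
      hq' hpq (ofMultiset_pair_eq_zero (hout (Or.inr le_rfl)) (hout (Or.inl le_rfl)))
      (Or.inr rfl) hp hμp

end PairConfig

lemma volume_regionBetween_Ioo {f g : ℝ → ℝ} (hf : Continuous f) (hg : Continuous g) {a b : ℝ}
    (hab : a ≤ b) (hfg : ∀ x ∈ Ioo a b, f x ≤ g x) :
    volume (regionBetween f g (Ioo a b)) = ENNReal.ofReal (∫ x in a..b, g x - f x) := by
  rw [Measure.volume_eq_prod, volume_regionBetween_eq_integral
    (hf.integrableOn_Icc.mono_set Ioo_subset_Icc_self)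
    (hg.integrableOn_Icc.mono_set Ioo_subset_Icc_self) measurableSet_Ioo hfg,
    intervalIntegral.integral_of_le hab, integral_Ioc_eq_integral_Ioo]
  rfl

lemma volume_graph_eq_zero {f : ℝ → ℝ} (hf : Measurable f) :
    volume {x : ℝ × ℝ | x.2 = f x.1} = 0 := by
  have hmeas : MeasurableSet {x : ℝ × ℝ | x.2 = f x.1} :=
    measurableSet_eq_fun measurable_snd (hf.comp measurable_fst)
  rw [Measure.volume_eq_prod, Measure.prod_apply hmeas]
  simp

lemma volume_vertical_line_eq_zero (c : ℝ) : volume {x : ℝ × ℝ | x.1 = c} = 0 := by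
  rw [show {x : ℝ × ℝ | x.1 = c} = {c} ×ˢ univ by ext; simp, Measure.volume_eq_prod,
    Measure.prod_prod, Real.volume_singleton, zero_mul]

def lengthOneRegion : Set (ℝ × ℝ) :=
  regionBetween 0 (fun p => 1 - p) (Ioo (1 / 2) 1) ∪
    regionBetween (fun p => 1 - p) 1 (Ioo 0 (1 / 2))

lemma volume_lengthOneRegion : volume lengthOneRegion = 1 / 4 := by
  have hdisj : Disjoint (regionBetween 0 (fun p => 1 - p) (Ioo (1 / 2 : ℝ) 1))
      (regionBetween (fun p => 1 - p) 1 (Ioo 0 (1 / 2))) :=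
    disjoint_left.mpr fun x h1 h2 => by linarith [h1.1.1, h2.1.2]
  rw [lengthOneRegion, measure_union hdisj
      (measurableSet_regionBetween (by fun_prop) (by fun_prop) measurableSet_Ioo),
    volume_regionBetween_Ioo (by fun_prop) (by fun_prop) (by norm_num)
      (fun x hx => by simp only [Pi.zero_apply]; linarith [hx.2]),
    volume_regionBetween_Ioo (by fun_prop) (by fun_prop) (by norm_num)
      (fun x hx => by simp only [Pi.one_apply]; linarith [hx.1])]
  norm_num [intervalIntegral.integral_comp_sub_left fun x => x]
  rw [← ENNReal.ofReal_add (by norm_num) (by norm_num), ← ENNReal.ofReal_ofNat 4,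
    ← ENNReal.ofReal_inv_of_pos (by norm_num)]
  norm_num

lemma lengthOneRegion_subset_lengthLocus : lengthOneRegion ⊆ lengthLocus 1 := by
  rintro ⟨p, q⟩ (⟨⟨hp, hp1⟩, hq, hqp⟩ | ⟨⟨hp0, hp⟩, hpq, hq1⟩)
  · simp only [Pi.zero_apply] at hq
    exact ⟨⟨by linarith, hp1⟩, ⟨hq, by linarith⟩, by intro h; linarith,
      relaxLength_eq_one_of_lt_one_sub hp hp1 hq hqp⟩
  · simp only [Pi.one_apply] at hq1
    exact ⟨⟨hp0, by linarith⟩, ⟨by linarith, hq1⟩, by intro h; linarith,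
      relaxLength_eq_one_of_one_sub_lt hp0 hp hpq hq1⟩

lemma lengthLocus_one_diff_lengthOneRegion_subset :
    lengthLocus 1 \ lengthOneRegion ⊆ {x | x.1 = 1 / 2} ∪ {x | x.2 = 1 - x.1} := by
  rintro ⟨p, q⟩ ⟨⟨hp, hq, hpq, hL⟩, hgood⟩
  by_contra hline
  simp only [mem_union, mem_ofPred_eq, not_or] at hline
  refine relaxLength_ne_one hp hq hpq hline.1 (fun h => hline.2 (by linarith)) ?_ hL
  rintro (⟨hp2, hqp⟩ | ⟨hp2, hpq⟩)
  · exact hgood (Or.inl ⟨⟨hp2, hp.2⟩, hq.1, hqp⟩)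
  · exact hgood (Or.inr ⟨⟨hp.1, hp2⟩, hpq, hq.2⟩)

/-- The locus `L(p,q) = 1` has Lebesgue measure `1/4`. -/
theorem measure_lengthLocus_one : volume (lengthLocus 1) = 1 / 4 := by
  rw [← volume_lengthOneRegion]
  refine (measure_eq_measure_of_null_sdiff lengthOneRegion_subset_lengthLocus ?_).symm
  exact measure_mono_null lengthLocus_one_diff_lengthOneRegion_subset <|
    measure_union_null (volume_vertical_line_eq_zero _) (volume_graph_eq_zero (by fun_prop))
end

section
/- Let p_1, …, p_{n+1} ∈ (0,1) be distinct points, let q_n ∈ [0,1) be the fractional part of −(p_1 + ⋯ + p_n) and q_{n+1} ∈ [0,1) the fractional part of −(p_1 + ⋯ + p_{n+1}), and assume the genericity conditions q_n ∉ {0, p_1, …, p_{n+1}} and q_{n+1} ∉ {0, p_1, …, p_{n+1}}. Let μ_n be the unique admissible configuration of minimal total mass whose support contains {p_1,…,p_n}, let μ_{n+1} be the one for {p_1,…,p_{n+1}}, and let F_{μ_n}, F_{μ_{n+1}} be the associated Ω-tropical polynomials. Then the set I_{n+1} = {x ∈ (0,1) : F_{μ_n}(x) ≠ F_{μ_{n+1}}(x)}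 equals the open interval (0, q_n) if p_{n+1} < q_n, and equals (q_n, 1) if p_{n+1} > q_n. -/
/-!
An admissible configuration `μ` with `1 ≤ μ` on a finite set `S ⊆ (0,1)` is `1_S + ν` with
`ν ≥ 0`. If `q = fract (-∑ S)` is neither `0` nor in `S`, then `ν = 0` is impossible (`∑ S ∉ ℤ`),
while `1_{S ∪ {q}}` is admissible; so a minimal `μ` has `ν = δ_h` with `∑ S + h ∈ ℤ` and
`h ∈ (0,1)`, forcing `h = q`. Thus `μₙ = 1_{Sₙ ∪ {qₙ}}` and `μₙ₊₁ = 1_{Sₙ ∪ {pₙ₊₁, qₙ₊₁}}`.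

`F_μ` is additive in `μ`, an atom at `h` contributing the tent
`φ_h x = min ((1 - h) x) (h (1 - x))`, so `F_{μₙ₊₁} - F_{μₙ} = φ_a + φ_b - φ_{qₙ}` with
`a = pₙ₊₁`, `b = qₙ₊₁`, and `qₙ = a + b` or `qₙ = a + b - 1` according as `a < qₙ` or `qₙ < a`.
Now `φ_a + φ_b = φ_{a+b}` exactly on `[a+b, 1]` (all three are multiples of `1 - x` there), and
`φ_a + φ_b = φ_{a+b-1}` exactly on `[0, a+b-1]` (all three are multiples of `x` there).
-/

open Classical MeasureTheory Function Set

/-- The `Ω`-tropical polynomial associated with an admissible configuration `μ`: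
`F_μ(x) = (Σ_h μ(h)(1 − h))·x + Σ_h μ(h)·min(0, h − x)`. -/
noncomputable def assocPoly (μ : ℝ → ℕ) (x : ℝ) : ℝ :=
  (∑ᶠ h, (μ h : ℝ) * (1 - h)) * x + ∑ᶠ h, (μ h : ℝ) * min 0 (h - x)

noncomputable def indicatorConfig (T : Finset ℝ) : ℝ → ℕ := fun x => if x ∈ T then 1 else 0

-- The Ω-tropical polynomial of a single atom at `h`, equal to `min ((1 - h) * x) (h * (1 - x))`.
noncomputable def tent (h x : ℝ) : ℝ := (1 - h) * x + min 0 (h - x)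

section indicatorConfig

variable (T : Finset ℝ)

lemma support_indicatorConfig : support (indicatorConfig T) = T := by
  ext x; simp [indicatorConfig]

lemma finsum_indicatorConfig_mul (g : ℝ → ℝ) :
    ∑ᶠ h, (indicatorConfig T h : ℝ) * g h = ∑ h ∈ T, g h := by
  rw [finsum_eq_finsetSum_of_support_subset (s := T)]
  · exact Finset.sum_congr rfl fun x hx => by simp [indicatorConfig, hx]
  · exact (support_mul_subset_left _ _).trans (by simp [← support_indicatorConfig T])

lemma totalMass_indicatorConfig : totalMass (indicatorConfig T) = T.card := by
  rw [totalMass, finsum_eq_finsetSum_of_support_subset _ (support_indicatorConfig T).subset]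
  simp [indicatorConfig]

lemma weightedSum_indicatorConfig : weightedSum (indicatorConfig T) = ∑ h ∈ T, h :=
  finsum_indicatorConfig_mul T id

lemma assocPoly_indicatorConfig (x : ℝ) :
    assocPoly (indicatorConfig T) x = ∑ h ∈ T, tent h x := by
  rw [assocPoly, finsum_indicatorConfig_mul, finsum_indicatorConfig_mul, Finset.sum_mul,
    ← Finset.sum_add_distrib]
  rfl

lemma admissible_indicatorConfig (hT : ↑T ⊆ Ioo (0 : ℝ) 1) {z : ℤ} (hz : ∑ h ∈ T, h = z) :
    Admissible (indicatorConfig T) :=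
  ⟨⟨by simp [support_indicatorConfig], by rwa [support_indicatorConfig]⟩, z,
    by rw [weightedSum_indicatorConfig, hz]⟩

lemma indicatorConfig_add_singleton {q : ℝ} (hq : q ∉ T) :
    indicatorConfig T + indicatorConfig {q} = indicatorConfig (insert q T) := by
  ext x
  by_cases hx : x = q
  · subst hx; simp [indicatorConfig, hq]
  · simp [indicatorConfig, hx]

end indicatorConfig

lemma totalMass_add {μ ν : ℝ → ℕ} (hμ : (support μ).Finite) (hν : (support ν).Finite) :
    totalMass (μ + ν) = totalMass μ + totalMass ν :=
  finsum_add_distrib hμ hν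

lemma weightedSum_add {μ ν : ℝ → ℕ} (hμ : (support μ).Finite) (hν : (support ν).Finite) :
    weightedSum (μ + ν) = weightedSum μ + weightedSum ν := by
  have hfin : ∀ {κ : ℝ → ℕ}, (support κ).Finite → (support fun h => (κ h : ℝ) * h).Finite :=
    fun hκ => hκ.subset ((support_mul_subset_left _ _).trans (by simp))
  simp only [weightedSum, Pi.add_apply, Nat.cast_add, add_mul]
  exact finsum_add_distrib (hfin hμ) (hfin hν)

lemma eq_zero_or_eq_indicatorConfig_singleton_of_totalMass_le_one {ν : ℝ → ℕ}
    (hfin : (support ν).Finite) (hν : totalMass ν ≤ 1) :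
    ν = 0 ∨ ∃ h, ν = indicatorConfig {h} := by
  refine or_iff_not_imp_left.2 fun hne => ?_
  obtain ⟨h, hh⟩ : ∃ h, ν h ≠ 0 := Function.ne_iff.1 hne
  have hpair : ∀ x ≠ h, ν x + ν h ≤ totalMass ν := fun x hx => by
    rw [← Finset.sum_pair hx, totalMass,
      finsum_eq_finsetSum_of_support_subset _ (s := hfin.toFinset ∪ {x, h})
        (by rw [Finset.coe_union, hfin.coe_toFinset]; exact subset_union_left)]
    exact Finset.sum_le_sum_of_subset Finset.subset_union_right
  have hνh : ν h ≤ 1 := (single_le_finsum h hfin fun _ => Nat.zero_le _).trans hν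
  refine ⟨h, funext fun x => ?_⟩
  by_cases hx : x = h
  · subst hx; simp only [indicatorConfig, Finset.mem_singleton, ↓reduceIte]; omega
  · have := hpair x hx
    simp only [indicatorConfig, Finset.mem_singleton, hx, ↓reduceIte]; omega

lemma eq_fract_neg_of_add_eq_intCast {s h : ℝ} (h0 : 0 ≤ h) (h1 : h < 1) {z : ℤ}
    (hz : s + h = z) : h = Int.fract (-s) :=
  (Int.fract_eq_iff.2 ⟨h0, h1, -z, by push_cast; linarith⟩).symm

lemma IsMinimalConfig.eq_indicatorConfig_insert_fract {S : Finset ℝ} (hS : ↑S ⊆ Ioo (0 : ℝ) 1)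
    {q : ℝ} (hq : q = Int.fract (-(∑ h ∈ S, h))) (hq0 : q ≠ 0) (hqS : q ∉ S) {μ : ℝ → ℕ}
    (hμ : IsMinimalConfig ↑S μ) : μ = indicatorConfig (insert q S) := by
  obtain ⟨⟨⟨hfin, hsupp⟩, z, hz⟩, hSμ, hmin⟩ := hμ
  have hq01 : q ∈ Ioo (0 : ℝ) 1 :=
    ⟨(hq ▸ Int.fract_nonneg _).lt_of_ne' hq0, hq ▸ Int.fract_lt_one _⟩
  have hadm : Admissible (indicatorConfig (insert q S)) := by
    refine admissible_indicatorConfig _ (by simpa [insert_subset_iff] using ⟨hq01, hS⟩)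
      (z := -⌊-(∑ h ∈ S, h)⌋) ?_
    rw [Finset.sum_insert hqS, hq, Int.fract]; push_cast; ring
  have hmass : totalMass μ ≤ S.card + 1 := by
    simpa [totalMass_indicatorConfig, Finset.card_insert_of_notMem hqS] using
      hmin _ hadm fun p hp => by simp [indicatorConfig, Finset.mem_insert_of_mem hp]
  set ν := μ - indicatorConfig S
  have hνfin : (support ν).Finite := hfin.subset fun x hx => by
    simp only [mem_support, ν, Pi.sub_apply] at hx ⊢; omega
  have hμν : μ = indicatorConfig S + ν := by
    refine (add_tsub_cancel_of_le fun x => ?_).symm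
    by_cases hx : x ∈ S
    · simpa [indicatorConfig, hx] using hSμ x hx
    · simp [indicatorConfig, hx]
  have hSfin : (support (indicatorConfig S)).Finite := by simp [support_indicatorConfig]
  have hmass_split : totalMass μ = S.card + totalMass ν := by
    rw [hμν, totalMass_add hSfin hνfin, totalMass_indicatorConfig]
  have hweight_split : weightedSum μ = ∑ h ∈ S, h + weightedSum ν := by
    rw [hμν, weightedSum_add hSfin hνfin, weightedSum_indicatorConfig]
  rcases eq_zero_or_eq_indicatorConfig_singleton_of_totalMass_le_one hνfin (by omega) with
    hν | ⟨h, hν⟩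
  · refine absurd ?_ hq0
    rw [hμν, hν, add_zero, weightedSum_indicatorConfig] at hz
    rw [hq, hz, ← Int.cast_neg, Int.fract_intCast]
  · have hh : h ∈ Ioo (0 : ℝ) 1 := hsupp (by simp [hμν, hν, indicatorConfig])
    rw [hweight_split, hν, weightedSum_indicatorConfig, Finset.sum_singleton] at hz
    rw [hμν, hν, (eq_fract_neg_of_add_eq_intCast hh.1.le hh.2 hz).trans hq.symm,
      indicatorConfig_add_singleton _ hqS]

lemma IsMinimalConfig.assocPoly_ne_iff_of_insert {S : Finset ℝ} {a q q' : ℝ} {μ μ' : ℝ → ℕ}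
    (hS : ↑(insert a S) ⊆ Ioo (0 : ℝ) 1) (haS : a ∉ S)
    (hq : q = Int.fract (-(∑ h ∈ S, h))) (hq0 : q ≠ 0) (hqS : q ∉ S)
    (hq' : q' = Int.fract (-(∑ h ∈ insert a S, h))) (hq'0 : q' ≠ 0) (hq'S : q' ∉ insert a S)
    (hμ : IsMinimalConfig ↑S μ) (hμ' : IsMinimalConfig ↑(insert a S) μ') (x : ℝ) :
    assocPoly μ x ≠ assocPoly μ' x ↔ tent q x ≠ tent a x + tent (Int.fract (q - a)) x := by
  have hq'q : q' = Int.fract (q - a) := by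
    rw [hq', hq, ← Int.self_sub_floor (-∑ h ∈ S, h), sub_right_comm, Int.fract_sub_intCast,
      Finset.sum_insert haS, neg_add, sub_eq_add_neg, add_comm]
  have hSsub : ↑S ⊆ Ioo (0 : ℝ) 1 := (Finset.coe_subset.2 (Finset.subset_insert a S)).trans hS
  rw [hμ.eq_indicatorConfig_insert_fract hSsub hq hq0 hqS,
    hμ'.eq_indicatorConfig_insert_fract hS hq' hq'0 hq'S, assocPoly_indicatorConfig,
    assocPoly_indicatorConfig, Finset.sum_insert hqS, Finset.sum_insert hq'S,
    Finset.sum_insert haS, ← hq'q, ne_eq, ne_eq, not_iff_not]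
  constructor <;> intro h <;> linarith

lemma tent_ne_tent_add_tent_sub_iff {a q x : ℝ} (ha : 0 < a) (haq : a < q) (hx : 0 < x) :
    tent q x ≠ tent a x + tent (q - a) x ↔ x < q := by
  unfold tent; simp only [min_def]
  constructor
  · intro h; by_contra h'; apply h; split_ifs <;> linarith
  · intro h h'; split_ifs at h' <;> linarith

lemma tent_ne_tent_add_tent_sub_add_one_iff {a q x : ℝ} (ha : a < 1) (hqa : q < a) (hx : x < 1) :
    tent q x ≠ tent a x + tent (q - a + 1) x ↔ q < x := by
  unfold tent; simp only [min_def]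
  constructor
  · intro h; by_contra h'; apply h; split_ifs <;> linarith
  · intro h h'; split_ifs at h' <;> linarith

lemma setOf_tent_ne_eq_Ioo_zero_of_lt {a q : ℝ} (ha : 0 < a) (hq : q < 1) (haq : a < q) :
    {x ∈ Ioo (0 : ℝ) 1 | tent q x ≠ tent a x + tent (Int.fract (q - a)) x} = Ioo 0 q := by
  rw [Int.fract_eq_self.2 ⟨by linarith, by linarith⟩]
  ext x
  simp only [mem_ofPred_eq, mem_Ioo]
  constructor
  · rintro ⟨⟨hx0, -⟩, hne⟩
    exact ⟨hx0, (tent_ne_tent_add_tent_sub_iff ha haq hx0).1 hne⟩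
  · rintro ⟨hx0, hxq⟩
    exact ⟨⟨hx0, hxq.trans hq⟩, (tent_ne_tent_add_tent_sub_iff ha haq hx0).2 hxq⟩

lemma setOf_tent_ne_eq_Ioo_one_of_gt {a q : ℝ} (ha : a < 1) (hq : 0 < q) (hqa : q < a) :
    {x ∈ Ioo (0 : ℝ) 1 | tent q x ≠ tent a x + tent (Int.fract (q - a)) x} = Ioo q 1 := by
  rw [← Int.fract_add_one, Int.fract_eq_self.2 ⟨by linarith, by linarith⟩]
  ext x
  simp only [mem_ofPred_eq, mem_Ioo]
  constructor
  · rintro ⟨⟨-, hx1⟩, hne⟩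
    exact ⟨(tent_ne_tent_add_tent_sub_add_one_iff ha hqa hx1).1 hne, hx1⟩
  · rintro ⟨hqx, hx1⟩
    exact ⟨⟨hq.trans hqx, hx1⟩, (tent_ne_tent_add_tent_sub_add_one_iff ha hqa hx1).2 hqx⟩

/-- Under genericity assumptions, the avalanche set — where the
limiting tropical polynomials for `n` and `n + 1` points differ — is the interval
`(0, qₙ)` if `p_{n+1} < qₙ`, and `(qₙ, 1)` if `p_{n+1} > qₙ`. -/
theorem avalanche_interval {n : ℕ} (p : Fin (n + 1) → ℝ)
    (hmem : ∀ i, p i ∈ Set.Ioo (0 : ℝ) 1) (hinj : Function.Injective p)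
    (qn qn1 : ℝ)
    (hqn : qn = Int.fract (-(∑ i : Fin n, p i.castSucc)))
    (hqn1 : qn1 = Int.fract (-(∑ i, p i)))
    (hgen : qn ≠ 0 ∧ ∀ i, qn ≠ p i)
    (hgen1 : qn1 ≠ 0 ∧ ∀ i, qn1 ≠ p i)
    (μn μn1 : ℝ → ℕ)
    (hμn : IsMinimalConfig (Set.range fun i : Fin n => p i.castSucc) μn)
    (hμn1 : IsMinimalConfig (Set.range p) μn1) :
    (p (Fin.last n) < qn →
      {x ∈ Set.Ioo (0 : ℝ) 1 | assocPoly μn x ≠ assocPoly μn1 x} = Set.Ioo 0 qn) ∧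
    (qn < p (Fin.last n) →
      {x ∈ Set.Ioo (0 : ℝ) 1 | assocPoly μn x ≠ assocPoly μn1 x} = Set.Ioo qn 1) := by
  set a := p (Fin.last n)
  set S := Finset.univ.map ⟨fun i : Fin n => p i.castSucc, hinj.comp (Fin.castSucc_injective n)⟩
  have hS : (S : Set ℝ) = range fun i : Fin n => p i.castSucc := by simp [S]
  have hS1 : (↑(insert a S) : Set ℝ) = range p := by
    ext x
    rw [Finset.coe_insert, hS, mem_insert_iff, mem_range, mem_range, Fin.exists_fin_succ', or_comm]
    exact or_congr_right eq_comm
  have haS : a ∉ S := fun h => by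
    obtain ⟨i, -, hi⟩ := Finset.mem_map.1 h
    exact Fin.castSucc_ne_last i (hinj hi)
  have hqnS : qn ∉ S := by simpa [S] using fun i : Fin n => (hgen.2 i.castSucc).symm
  have hqn1S : qn1 ∉ insert a S := fun h => by
    obtain ⟨i, hi⟩ := hS1 ▸ Finset.mem_coe.2 h
    exact hgen1.2 i hi.symm
  have hne := fun x => (hS ▸ hμn).assocPoly_ne_iff_of_insert
    (hS1 ▸ range_subset_iff.2 hmem) haS (by simpa [S] using hqn) hgen.1 hqnS
    (by rw [hqn1, Finset.sum_insert haS, Finset.sum_map, Fin.sum_univ_castSucc, add_comm]; rfl)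
    hgen1.1 hqn1S (hS1 ▸ hμn1) x
  simp_rw [hne]
  exact ⟨setOf_tent_ne_eq_Ioo_zero_of_lt (hmem _).1 (hqn ▸ Int.fract_lt_one _),
    setOf_tent_ne_eq_Ioo_one_of_gt (hmem _).2 ((hqn ▸ Int.fract_nonneg _).lt_of_ne' hgen.1)⟩
end
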